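/- arXiv:2310.12269 — 3 statements merged into one kernel-verified Lean document; each statement's English description precedes it below -/
import Mathlib

section
/- Every γ-min stable matching in a bipartite graph with preference valuations is γ-popular. -/
/-!
Compare a γ-min stable matching `M` with any matching `N`. If a vertex `u` votes for `N`, its
`N`-edge `e` is not in `M` and gives `u` a γ-sized improvement; since `e` does not γ-min block
`M`, the other endpoint of `e` gains less than its threshold from `e`, so it votes for `M`.
Sending each vertex voting for `N` to its `N`-partner is injective, so the votes for `N` on each
side of the bipartition are at most the votes for `M` on the other side.
-/

open Finset
open scoped Classical
noncomputable section

/-- A bipartite preference instance: bipartite (multi)graph `G=(U,W;E)` where each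
edge `e` has endpoints `src e ∈ U`, `dst e ∈ W`, and every vertex has a preference
valuation over edges (only values on incident edges are relevant); the valuation of
being unmatched (`∅`) is `0`. -/
structure PrefInst (U W E : Type) where
  src : E → U
  dst : E → W
  pU : U → E → ℝ
  pW : W → E → ℝ

namespace PrefInst

variable {U W E : Type} [DecidableEq U] [DecidableEq W] [DecidableEq E]

/-- `M` is a matching: no two distinct edges of `M` share an endpoint. -/
def IsMatching (I : PrefInst U W E) (M : Finset E) : Prop :=
  ∀ e ∈ M, ∀ f ∈ M, e ≠ f → I.src e ≠ I.src f ∧ I.dst e ≠ I.dst f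

/-- The edge of `M` incident to `u ∈ U` (if any): `M(u)`. -/
def mU (I : PrefInst U W E) (M : Finset E) (u : U) : Option E :=
  (M.filter fun e => I.src e = u).toList.head?

/-- The edge of `M` incident to `w ∈ W` (if any): `M(w)`. -/
def mW (I : PrefInst U W E) (M : Finset E) (w : W) : Option E :=
  (M.filter fun e => I.dst e = w).toList.head?

/-- Valuation by `u` of a possible partner edge, with `p_u(∅) = 0`. -/
def valU (I : PrefInst U W E) (u : U) : Option E → ℝ
  | none => 0
  | some e => I.pU u e

def valW (I : PrefInst U W E) (w : W) : Option E → ℝ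
  | none => 0
  | some e => I.pW w e

/-- `M` is maximal: no edge can be added keeping it a matching. -/
def Maximal (I : PrefInst U W E) (M : Finset E) : Prop :=
  ∀ e ∉ M, ¬ I.IsMatching (insert e M)

/-- Edge `e ∉ M` blocks `M` in the weak-stability sense: both endpoints strictly improve. -/
def Blocks (I : PrefInst U W E) (M : Finset E) (e : E) : Prop :=
  e ∉ M ∧ I.valU (I.src e) (I.mU M (I.src e)) < I.pU (I.src e) e ∧
    I.valW (I.dst e) (I.mW M (I.dst e)) < I.pW (I.dst e) e

/-- Weak stability: no blocking edge. -/
def WeaklyStable (I : PrefInst U W E) (M : Finset E) : Prop :=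
  ∀ e, ¬ I.Blocks M e

/-- Edge `e ∉ M` γ-min blocks `M`: both endpoints improve by at least their γ-threshold. -/
def GBlocks (I : PrefInst U W E) (γU γW : E → ℝ) (M : Finset E) (e : E) : Prop :=
  e ∉ M ∧ I.valU (I.src e) (I.mU M (I.src e)) + γU e ≤ I.pU (I.src e) e ∧
    I.valW (I.dst e) (I.mW M (I.dst e)) + γW e ≤ I.pW (I.dst e) e

/-- γ-min stability: no γ-min blocking edge. -/
def GMinStable (I : PrefInst U W E) (γU γW : E → ℝ) (M : Finset E) : Prop :=
  ∀ e, ¬ I.GBlocks γU γW M e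

/-- Standard vote of `u` comparing `M` to `N`: `+1` if strictly better in `M`,
`-1` if strictly better in `N`, `0` on equal value. -/
def sVoteU (I : PrefInst U W E) (M N : Finset E) (u : U) : ℤ :=
  if I.valU u (I.mU M u) = I.valU u (I.mU N u) then 0
  else if I.valU u (I.mU M u) < I.valU u (I.mU N u) then -1 else 1

def sVoteW (I : PrefInst U W E) (M N : Finset E) (w : W) : ℤ :=
  if I.valW w (I.mW M w) = I.valW w (I.mW N w) then 0
  else if I.valW w (I.mW M w) < I.valW w (I.mW N w) then -1 else 1

/-- Weak vote of `u`: `0` if same partner, `-1` on strict improvement in `N`,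
`+1` otherwise (partner changed without strict improvement). -/
def wVoteU (I : PrefInst U W E) (M N : Finset E) (u : U) : ℤ :=
  if I.mU M u = I.mU N u then 0
  else if I.valU u (I.mU M u) < I.valU u (I.mU N u) then -1 else 1

def wVoteW (I : PrefInst U W E) (M N : Finset E) (w : W) : ℤ :=
  if I.mW M w = I.mW N w then 0
  else if I.valW w (I.mW M w) < I.valW w (I.mW N w) then -1 else 1

/-- Super vote of `u`: `0` if same partner, `-1` if the new partner is weakly
preferred (and different), `+1` only on strict worsening. -/
def supVoteU (I : PrefInst U W E) (M N : Finset E) (u : U) : ℤ :=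
  if I.mU M u = I.mU N u then 0
  else if I.valU u (I.mU M u) ≤ I.valU u (I.mU N u) then -1 else 1

def supVoteW (I : PrefInst U W E) (M N : Finset E) (w : W) : ℤ :=
  if I.mW M w = I.mW N w then 0
  else if I.valW w (I.mW M w) ≤ I.valW w (I.mW N w) then -1 else 1

/-- γ-vote of `u`: `0` if same partner; `-1` if `p_u(N(u)) ≥ p_u(M(u)) + γ_{N(u)}^u`;
`+1` otherwise (partner changed without a γ-sized improvement). -/
def gVoteU (I : PrefInst U W E) (γU : E → ℝ) (M N : Finset E) (u : U) : ℤ :=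
  if I.mU M u = I.mU N u then 0
  else match I.mU N u with
    | none => 1
    | some e => if I.valU u (I.mU M u) + γU e ≤ I.pU u e then -1 else 1

def gVoteW (I : PrefInst U W E) (γW : E → ℝ) (M N : Finset E) (w : W) : ℤ :=
  if I.mW M w = I.mW N w then 0
  else match I.mW N w with
    | none => 1
    | some e => if I.valW w (I.mW M w) + γW e ≤ I.pW w e then -1 else 1

variable [Fintype U] [Fintype W]

/-- Popularity (standard votes): `M` never loses a head-to-head comparison. -/
def Popular (I : PrefInst U W E) (M : Finset E) : Prop :=
  ∀ N, I.IsMatching N → 0 ≤ (∑ u, I.sVoteU M N u) + ∑ w, I.sVoteW M N w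

/-- Weak popularity. -/
def WeaklyPopular (I : PrefInst U W E) (M : Finset E) : Prop :=
  ∀ N, I.IsMatching N → 0 ≤ (∑ u, I.wVoteU M N u) + ∑ w, I.wVoteW M N w

/-- Super popularity. -/
def SuperPopular (I : PrefInst U W E) (M : Finset E) : Prop :=
  ∀ N, I.IsMatching N → 0 ≤ (∑ u, I.supVoteU M N u) + ∑ w, I.supVoteW M N w

/-- γ-popularity. -/
def GammaPopular (I : PrefInst U W E) (γU γW : E → ℝ) (M : Finset E) : Prop :=
  ∀ N, I.IsMatching N → 0 ≤ (∑ u, I.gVoteU γU M N u) + ∑ w, I.gVoteW γW M N w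

end PrefInst
end




theorem sum_eq_card_filter_one_sub_card_filter_neg_one {α : Type*} [Fintype α] (f : α → ℤ)
    (hf : ∀ x, f x = -1 ∨ f x = 0 ∨ f x = 1) :
    ∑ x, f x = #{x | f x = 1} - #{x | f x = -1} := by
  have hsplit : ∀ x, f x = (if f x = 1 then 1 else 0) - (if f x = -1 then 1 else 0) := by
    intro x
    rcases hf x with h | h | h <;> simp [h]
  rw [Finset.sum_congr rfl fun x _ => hsplit x, Finset.sum_sub_distrib]
  simp [Finset.sum_boole]

namespace PrefInst

variable {U W E : Type} (I : PrefInst U W E) {γU γW : E → ℝ} {M N : Finset E}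

/-- Exchanging the sides turns `mU`, `gVoteU`, ... into `mW`, `gVoteW`, ... definitionally, so each
one-sided lemma below also gives its mirror image. -/
def swap : PrefInst W U E := ⟨I.dst, I.src, I.pW, I.pU⟩

theorem isMatching_swap : I.swap.IsMatching M ↔ I.IsMatching M :=
  forall₂_congr fun _ _ => forall₂_congr fun _ _ => forall_congr' fun _ => and_comm

theorem gMinStable_swap [DecidableEq U] [DecidableEq W] :
    I.swap.GMinStable γW γU M ↔ I.GMinStable γU γW M :=
  forall_congr' fun _ => not_congr <| and_congr_right fun _ => and_comm

variable {I}

theorem IsMatching.eq_of_src_eq (hM : I.IsMatching M) {e f : E} (he : e ∈ M) (hf : f ∈ M)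
    (h : I.src e = I.src f) : e = f :=
  by_contra fun hne => (hM e he f hf hne).1 h

theorem IsMatching.eq_of_dst_eq (hM : I.IsMatching M) {e f : E} (he : e ∈ M) (hf : f ∈ M)
    (h : I.dst e = I.dst f) : e = f :=
  ((isMatching_swap I).2 hM).eq_of_src_eq he hf h

theorem mU_eq_some_iff [DecidableEq U] (hM : I.IsMatching M) {u : U} {e : E} :
    I.mU M u = some e ↔ e ∈ M ∧ I.src e = u := by
  constructor
  · intro h
    have he : e ∈ (M.filter fun f => I.src f = u).toList := List.mem_of_mem_head? h
    simpa using he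
  · rintro ⟨he, rfl⟩
    have hfilter : M.filter (fun f => I.src f = I.src e) = {e} :=
      Finset.eq_singleton_iff_unique_mem.2
        ⟨Finset.mem_filter.2 ⟨he, rfl⟩, fun f hf =>
          hM.eq_of_src_eq (Finset.mem_filter.1 hf).1 he (Finset.mem_filter.1 hf).2⟩
    simp [mU, hfilter]

theorem mW_eq_some_iff [DecidableEq W] (hM : I.IsMatching M) {w : W} {e : E} :
    I.mW M w = some e ↔ e ∈ M ∧ I.dst e = w :=
  mU_eq_some_iff ((isMatching_swap I).2 hM)

variable (I) in
theorem gVoteU_cases [DecidableEq U] [DecidableEq E] (γU : E → ℝ) (M N : Finset E) (u : U) :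
    I.gVoteU γU M N u = -1 ∨ I.gVoteU γU M N u = 0 ∨ I.gVoteU γU M N u = 1 := by
  unfold gVoteU
  split_ifs
  · simp
  · split
    · simp
    · split_ifs <;> simp

theorem exists_of_gVoteU_eq_neg_one [DecidableEq U] [DecidableEq E] {u : U}
    (h : I.gVoteU γU M N u = -1) : ∃ e, I.mU N u = some e ∧ I.mU M u ≠ some e ∧
      I.valU u (I.mU M u) + γU e ≤ I.pU u e := by
  unfold gVoteU at h
  split_ifs at h with hsame
  rcases hNu : I.mU N u with _ | e <;> simp only [hNu] at h hsame
  · simp at h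
  · refine ⟨e, rfl, hsame, ?_⟩
    by_contra hlt
    simp [hlt] at h

theorem gVoteU_eq_one [DecidableEq U] [DecidableEq E] {u : U} {e : E}
    (hNu : I.mU N u = some e) (hMu : I.mU M u ≠ some e)
    (hlt : I.pU u e < I.valU u (I.mU M u) + γU e) : I.gVoteU γU M N u = 1 := by
  simp [gVoteU, hNu, hMu, not_le.2 hlt]

theorem gVoteW_eq_one [DecidableEq W] [DecidableEq E] {w : W} {e : E}
    (hNw : I.mW N w = some e) (hMw : I.mW M w ≠ some e)
    (hlt : I.pW w e < I.valW w (I.mW M w) + γW e) : I.gVoteW γW M N w = 1 :=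
  gVoteU_eq_one (I := I.swap) hNw hMw hlt

theorem exists_mem_gVoteW_dst_eq_one_of_gVoteU_eq_neg_one [DecidableEq U] [DecidableEq W]
    [DecidableEq E] (hM : I.IsMatching M) (hN : I.IsMatching N)
    (hstable : I.GMinStable γU γW M) {u : U} (hu : I.gVoteU γU M N u = -1) :
    ∃ e ∈ N, I.src e = u ∧ I.gVoteW γW M N (I.dst e) = 1 := by
  obtain ⟨e, hNu, hMu, hgain⟩ := exists_of_gVoteU_eq_neg_one hu
  obtain ⟨heN, rfl⟩ := (mU_eq_some_iff hN).1 hNu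
  have heM : e ∉ M := fun heM => hMu ((mU_eq_some_iff hM).2 ⟨heM, rfl⟩)
  have hloss : I.pW (I.dst e) e < I.valW (I.dst e) (I.mW M (I.dst e)) + γW e :=
    not_le.1 fun hle => hstable e ⟨heM, hgain, hle⟩
  refine ⟨e, heN, rfl, gVoteW_eq_one ((mW_eq_some_iff hN).2 ⟨heN, rfl⟩) ?_ hloss⟩
  exact fun h => heM ((mW_eq_some_iff hM).1 h).1

theorem card_gVoteU_eq_neg_one_le [DecidableEq U] [DecidableEq W] [DecidableEq E] [Fintype U]
    [Fintype W] (hM : I.IsMatching M) (hN : I.IsMatching N) (hstable : I.GMinStable γU γW M) :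
    #{u | I.gVoteU γU M N u = -1} ≤ #{w | I.gVoteW γW M N w = 1} := by
  refine Finset.card_le_card_of_forall_subsingleton
    (fun u w => ∃ e ∈ N, I.src e = u ∧ I.dst e = w) (fun u hu => ?_) (fun w _ => ?_)
  · obtain ⟨e, heN, hsrc, hdst⟩ :=
      exists_mem_gVoteW_dst_eq_one_of_gVoteU_eq_neg_one hM hN hstable (Finset.mem_filter.1 hu).2
    exact ⟨I.dst e, by simpa using hdst, e, heN, hsrc, rfl⟩
  · rintro u₁ ⟨-, e₁, he₁, rfl, hw₁⟩ u₂ ⟨-, e₂, he₂, rfl, hw₂⟩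
    rw [hN.eq_of_dst_eq he₁ he₂ (hw₁.trans hw₂.symm)]

end PrefInst

open PrefInst in
theorem gamma_min_stable_is_gamma_popular_general
    {U W E : Type} [DecidableEq U] [DecidableEq W] [DecidableEq E]
    [Fintype U] [Fintype W]
    (I : PrefInst U W E) (γU γW : E → ℝ)
    (M : Finset E) (hM : I.IsMatching M) (hstable : I.GMinStable γU γW M) :
    I.GammaPopular γU γW M := by
  intro N hN
  have hU := card_gVoteU_eq_neg_one_le hM hN hstable
  have hW : #{w | I.gVoteW γW M N w = -1} ≤ #{u | I.gVoteU γU M N u = 1} :=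
    card_gVoteU_eq_neg_one_le (I := I.swap) ((isMatching_swap I).2 hM)
      ((isMatching_swap I).2 hN) ((gMinStable_swap I).2 hstable)
  rw [sum_eq_card_filter_one_sub_card_filter_neg_one _ (gVoteU_cases I γU M N),
    sum_eq_card_filter_one_sub_card_filter_neg_one (I.gVoteW γW M N) (gVoteU_cases I.swap γW M N)]
  omega

open PrefInst in
/-- Every γ-min stable matching in a bipartite graph with preference
valuations (nonnegative on edges, with `p_v(∅) ≤ 0`, here `0`) is γ-popular. -/
theorem gamma_min_stable_is_gamma_popular
    {U W E : Type} [DecidableEq U] [DecidableEq W] [DecidableEq E]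
    [Fintype U] [Fintype W]
    (I : PrefInst U W E) (γU γW : E → ℝ)
    (hγU : ∀ e, 0 < γU e) (hγW : ∀ e, 0 < γW e)
    (hpU : ∀ u e, 0 ≤ I.pU u e) (hpW : ∀ w e, 0 ≤ I.pW w e)
    (M : Finset E) (hM : I.IsMatching M) (hstable : I.GMinStable γU γW M) :
    I.GammaPopular γU γW M :=
  gamma_min_stable_is_gamma_popular_general I γU γW M hM hstable
end

section
/- Every stable matching (with strict preferences) is popular, and hence every weakly stable matching in an instance with ties is weakly popular. -/
open Finset
open scoped Classical
namespace PrefInst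

variable {U W E : Type} [DecidableEq U] [DecidableEq W] [DecidableEq E]

lemma mU_some_mem {I : PrefInst U W E} {N : Finset E} {u : U} {e : E}
    (h : I.mU N u = some e) : e ∈ N ∧ I.src e = u := by
  unfold mU at h
  have he : e ∈ (N.filter fun f => I.src f = u).toList := by
    cases hl : (N.filter fun f => I.src f = u).toList with
    | nil => simp [hl] at h
    | cons a l => rw [hl] at h; simp at h; simp [hl, h]
  rw [Finset.mem_toList, Finset.mem_filter] at he
  exact he

lemma mU_eq_of_mem {I : PrefInst U W E} {N : Finset E} (hN : I.IsMatching N)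
    {e : E} (he : e ∈ N) : I.mU N (I.src e) = some e := by
  have hfil : (N.filter fun f => I.src f = I.src e) = {e} := by
    ext f
    simp only [Finset.mem_filter, Finset.mem_singleton]
    constructor
    · rintro ⟨hf, hsf⟩
      by_contra hne
      exact (hN f hf e he hne).1 hsf
    · rintro rfl; exact ⟨he, rfl⟩
  unfold mU
  rw [hfil, Finset.toList_singleton]
  rfl

lemma mU_none_of_notMem {I : PrefInst U W E} {N : Finset E} {u : U}
    (h : ∀ e ∈ N, I.src e ≠ u) : I.mU N u = none := by
  have hfil : (N.filter fun f => I.src f = u) = ∅ := by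
    ext f; simp only [Finset.mem_filter, Finset.notMem_empty, iff_false]
    rintro ⟨hf, hsf⟩; exact h f hf hsf
  unfold mU
  rw [hfil]
  simp

lemma mW_some_mem {I : PrefInst U W E} {N : Finset E} {w : W} {e : E}
    (h : I.mW N w = some e) : e ∈ N ∧ I.dst e = w := by
  unfold mW at h
  have he : e ∈ (N.filter fun f => I.dst f = w).toList := by
    cases hl : (N.filter fun f => I.dst f = w).toList with
    | nil => simp [hl] at h
    | cons a l => rw [hl] at h; simp at h; simp [hl, h]
  rw [Finset.mem_toList, Finset.mem_filter] at he
  exact he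

lemma mW_eq_of_mem {I : PrefInst U W E} {N : Finset E} (hN : I.IsMatching N)
    {e : E} (he : e ∈ N) : I.mW N (I.dst e) = some e := by
  have hfil : (N.filter fun f => I.dst f = I.dst e) = {e} := by
    ext f
    simp only [Finset.mem_filter, Finset.mem_singleton]
    constructor
    · rintro ⟨hf, hsf⟩
      by_contra hne
      exact (hN f hf e he hne).2 hsf
    · rintro rfl; exact ⟨he, rfl⟩
  unfold mW
  rw [hfil, Finset.toList_singleton]
  rfl

lemma mW_none_of_notMem {I : PrefInst U W E} {N : Finset E} {w : W}
    (h : ∀ e ∈ N, I.dst e ≠ w) : I.mW N w = none := by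
  have hfil : (N.filter fun f => I.dst f = w) = ∅ := by
    ext f; simp only [Finset.mem_filter, Finset.notMem_empty, iff_false]
    rintro ⟨hf, hsf⟩; exact h f hf hsf
  unfold mW
  rw [hfil]
  simp

end PrefInst

open PrefInst in
/-- Every (weakly) stable matching is weakly popular; with strict
preferences this is the classical statement that stable matchings are popular. -/
theorem weakly_stable_is_weakly_popular
    {U W E : Type} [DecidableEq U] [DecidableEq W] [DecidableEq E]
    [Fintype U] [Fintype W]
    (I : PrefInst U W E)
    (hpU : ∀ u e, 0 ≤ I.pU u e) (hpW : ∀ w e, 0 ≤ I.pW w e)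
    (M : Finset E) (hM : I.IsMatching M) (hstable : I.WeaklyStable M) :
    I.WeaklyPopular M := by
  intro N hN
  -- votes of vertices unmatched in N are nonneg
  have hvalU_nonneg : ∀ u o, 0 ≤ I.valU u o := by
    rintro u (_ | e)
    · exact le_refl 0
    · exact hpU u e
  have hvalW_nonneg : ∀ w o, 0 ≤ I.valW w o := by
    rintro w (_ | e)
    · exact le_refl 0
    · exact hpW w e
  have hUout : ∀ u ∉ N.image I.src, 0 ≤ I.wVoteU M N u := by
    intro u hu
    have hnone : I.mU N u = none := by
      apply mU_none_of_notMem
      intro e he hse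
      exact hu (Finset.mem_image.2 ⟨e, he, hse⟩)
    unfold PrefInst.wVoteU
    rw [hnone]
    split
    · exact le_refl 0
    · split
      · next h hlt =>
        exact absurd (lt_of_le_of_lt (hvalU_nonneg u _) hlt) (lt_irrefl _)
      · norm_num
  have hWout : ∀ w ∉ N.image I.dst, 0 ≤ I.wVoteW M N w := by
    intro w hw
    have hnone : I.mW N w = none := by
      apply mW_none_of_notMem
      intro e he hse
      exact hw (Finset.mem_image.2 ⟨e, he, hse⟩)
    unfold PrefInst.wVoteW
    rw [hnone]
    split
    · exact le_refl 0
    · split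
      · next h hlt =>
        exact absurd (lt_of_le_of_lt (hvalW_nonneg w _) hlt) (lt_irrefl _)
      · norm_num
  -- per-edge claim
  have hedge : ∀ e ∈ N, 0 ≤ I.wVoteU M N (I.src e) + I.wVoteW M N (I.dst e) := by
    intro e he
    have hNu : I.mU N (I.src e) = some e := mU_eq_of_mem hN he
    have hNw : I.mW N (I.dst e) = some e := mW_eq_of_mem hN he
    by_cases hUneg : I.wVoteU M N (I.src e) = -1
    · -- u strictly improves; then e ∉ M and w must vote +1
      have hu' : I.mU M (I.src e) ≠ I.mU N (I.src e) ∧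
          I.valU (I.src e) (I.mU M (I.src e)) < I.valU (I.src e) (I.mU N (I.src e)) := by
        unfold PrefInst.wVoteU at hUneg
        split at hUneg
        · norm_num at hUneg
        · split at hUneg
          · next h hlt => exact ⟨h, hlt⟩
          · norm_num at hUneg
      have heM : e ∉ M := by
        intro heM
        exact hu'.1 ((mU_eq_of_mem hM heM).trans hNu.symm)
      have hwne : I.mW M (I.dst e) ≠ I.mW N (I.dst e) := by
        intro hEq
        rw [hNw] at hEq
        exact heM (mW_some_mem hEq).1
      have hwnot : ¬ I.valW (I.dst e) (I.mW M (I.dst e)) <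
          I.valW (I.dst e) (I.mW N (I.dst e)) := by
        intro hlt
        apply hstable e
        refine ⟨heM, ?_, ?_⟩
        · have := hu'.2
          rw [hNu] at this
          exact this
        · rw [hNw] at hlt
          exact hlt
      have hWone : I.wVoteW M N (I.dst e) = 1 := by
        unfold PrefInst.wVoteW
        rw [if_neg hwne, if_neg hwnot]
      rw [hUneg, hWone]; norm_num
    · by_cases hWneg : I.wVoteW M N (I.dst e) = -1
      · -- symmetric
        have hw' : I.mW M (I.dst e) ≠ I.mW N (I.dst e) ∧
            I.valW (I.dst e) (I.mW M (I.dst e)) < I.valW (I.dst e) (I.mW N (I.dst e)) := by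
          unfold PrefInst.wVoteW at hWneg
          split at hWneg
          · norm_num at hWneg
          · split at hWneg
            · next h hlt => exact ⟨h, hlt⟩
            · norm_num at hWneg
        have heM : e ∉ M := by
          intro heM
          exact hw'.1 ((mW_eq_of_mem hM heM).trans hNw.symm)
        have hune : I.mU M (I.src e) ≠ I.mU N (I.src e) := by
          intro hEq
          rw [hNu] at hEq
          exact heM (mU_some_mem hEq).1
        have hunot : ¬ I.valU (I.src e) (I.mU M (I.src e)) <
            I.valU (I.src e) (I.mU N (I.src e)) := by
          intro hlt
          apply hstable e
          refine ⟨heM, ?_, ?_⟩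
          · rw [hNu] at hlt
            exact hlt
          · have := hw'.2
            rw [hNw] at this
            exact this
        have hUone : I.wVoteU M N (I.src e) = 1 := by
          unfold PrefInst.wVoteU
          rw [if_neg hune, if_neg hunot]
        rw [hUone, hWneg]; norm_num
      · -- both votes ≥ 0
        have h1 : 0 ≤ I.wVoteU M N (I.src e) := by
          unfold PrefInst.wVoteU at hUneg ⊢
          split
          · exact le_refl 0
          · split
            · next => split at hUneg <;> simp_all
            · norm_num
        have h2 : 0 ≤ I.wVoteW M N (I.dst e) := by
          unfold PrefInst.wVoteW at hWneg ⊢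
          split
          · exact le_refl 0
          · split
            · next => split at hWneg <;> simp_all
            · norm_num
        linarith
  -- sum manipulation
  have hsrc_inj : ∀ x ∈ N, ∀ y ∈ N, I.src x = I.src y → x = y := by
    intro x hx y hy hxy
    by_contra hne
    exact (hN x hx y hy hne).1 hxy
  have hdst_inj : ∀ x ∈ N, ∀ y ∈ N, I.dst x = I.dst y → x = y := by
    intro x hx y hy hxy
    by_contra hne
    exact (hN x hx y hy hne).2 hxy
  have hsubU : N.image I.src ⊆ Finset.univ := Finset.subset_univ _
  have hsubW : N.image I.dst ⊆ Finset.univ := Finset.subset_univ _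
  have hImU : ∑ u ∈ N.image I.src, I.wVoteU M N u = ∑ e ∈ N, I.wVoteU M N (I.src e) :=
    Finset.sum_image hsrc_inj
  have hsdU : (∑ u ∈ Finset.univ \ N.image I.src, I.wVoteU M N u)
      + ∑ u ∈ N.image I.src, I.wVoteU M N u = ∑ u, I.wVoteU M N u :=
    Finset.sum_sdiff hsubU
  have hsumU : ∑ u, I.wVoteU M N u ≥ ∑ e ∈ N, I.wVoteU M N (I.src e) := by
    have : 0 ≤ ∑ u ∈ Finset.univ \ N.image I.src, I.wVoteU M N u :=
      Finset.sum_nonneg fun u hu => hUout u (Finset.mem_sdiff.1 hu).2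
    linarith
  have hImW : ∑ w ∈ N.image I.dst, I.wVoteW M N w = ∑ e ∈ N, I.wVoteW M N (I.dst e) :=
    Finset.sum_image hdst_inj
  have hsdW : (∑ w ∈ Finset.univ \ N.image I.dst, I.wVoteW M N w)
      + ∑ w ∈ N.image I.dst, I.wVoteW M N w = ∑ w, I.wVoteW M N w :=
    Finset.sum_sdiff hsubW
  have hsumW : ∑ w, I.wVoteW M N w ≥ ∑ e ∈ N, I.wVoteW M N (I.dst e) := by
    have : 0 ≤ ∑ w ∈ Finset.univ \ N.image I.dst, I.wVoteW M N w :=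
      Finset.sum_nonneg fun w hw => hWout w (Finset.mem_sdiff.1 hw).2
    linarith
  have hsum : 0 ≤ ∑ e ∈ N, (I.wVoteU M N (I.src e) + I.wVoteW M N (I.dst e)) :=
    Finset.sum_nonneg hedge
  rw [Finset.sum_add_distrib] at hsum
  linarith
end

section
/- In the 10-vertex path instance with preferences u_1: f_1 ≻ e_1; u_2: f_2 ≻ e_2; u_3: f_3 ≻ e_3; u_4: e_4 ≻ f_4; u_5: e_5; w_1: e_1; w_2: f_1 ∼ e_2; w_3: f_2 ∼ e_3; w_4: f_3 ∼ e_4; w_5: f_4 ≻ e_5, the matching N = {e_1,…,e_5} is weakly stable, the matching M = {f_1,…,f_4} is weakly popular, and |M| = (4/5)|N|. -/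
open Finset
open scoped Classical
/-- The 10-vertex path instance: edges `0..4 = e_1..e_5` (`e_i=(u_i,w_i)`) and
`5..8 = f_1..f_4` (`f_i=(u_i,w_{i+1})`); preferences: `u_1: f_1 ≻ e_1`,
`u_2: f_2 ≻ e_2`, `u_3: f_3 ≻ e_3`, `u_4: e_4 ≻ f_4`, `u_5: e_5`, `w_1: e_1`,
`w_2: f_1 ∼ e_2`, `w_3: f_2 ∼ e_3`, `w_4: f_3 ∼ e_4`, `w_5: f_4 ≻ e_5`. -/
noncomputable def inst12 : PrefInst (Fin 5) (Fin 5) (Fin 9) where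
  src := ![0, 1, 2, 3, 4, 0, 1, 2, 3]
  dst := ![0, 1, 2, 3, 4, 1, 2, 3, 4]
  pU := fun u e => !![1,0,0,0,0,2,0,0,0;
                      0,1,0,0,0,0,2,0,0;
                      0,0,1,0,0,0,0,2,0;
                      0,0,0,2,0,0,0,0,1;
                      0,0,0,0,1,0,0,0,0] u e
  pW := fun w e => !![1,0,0,0,0,0,0,0,0;
                      0,1,0,0,0,1,0,0,0;
                      0,0,1,0,0,0,1,0,0;
                      0,0,0,1,0,0,0,1,0;
                      0,0,0,0,1,0,0,0,2] w e

section Aux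

open PrefInst

variable {U W E : Type} [DecidableEq U] [DecidableEq W] [DecidableEq E]

theorem aux_mem_of_mU {I : PrefInst U W E} {N : Finset E} {u : U} {e : E}
    (h : I.mU N u = some e) : e ∈ N ∧ I.src e = u := by
  have h' : (N.filter fun f => I.src f = u).toList.head? = some e := h
  have he : e ∈ (N.filter fun f => I.src f = u) := by
    rw [← Finset.mem_toList]
    exact List.mem_of_mem_head? (by rw [h']; rfl)
  exact Finset.mem_filter.mp he

theorem aux_mem_of_mW {I : PrefInst U W E} {N : Finset E} {w : W} {e : E}
    (h : I.mW N w = some e) : e ∈ N ∧ I.dst e = w := by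
  have h' : (N.filter fun f => I.dst f = w).toList.head? = some e := h
  have he : e ∈ (N.filter fun f => I.dst f = w) := by
    rw [← Finset.mem_toList]
    exact List.mem_of_mem_head? (by rw [h']; rfl)
  exact Finset.mem_filter.mp he

theorem aux_mU_eq_some {I : PrefInst U W E} {N : Finset E} (hN : I.IsMatching N) {u : U} {e : E}
    (he : e ∈ N) (hu : I.src e = u) : I.mU N u = some e := by
  have hf : (N.filter fun f => I.src f = u) = {e} := by
    apply Finset.eq_singleton_iff_unique_mem.mpr
    refine ⟨Finset.mem_filter.mpr ⟨he, hu⟩, ?_⟩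
    intro f hfm
    obtain ⟨hfN, hfu⟩ := Finset.mem_filter.mp hfm
    by_contra hne
    exact (hN f hfN e he hne).1 (hfu.trans hu.symm)
  show (N.filter fun f => I.src f = u).toList.head? = some e
  rw [hf, Finset.toList_singleton]
  rfl

theorem aux_mW_eq_some {I : PrefInst U W E} {N : Finset E} (hN : I.IsMatching N) {w : W} {e : E}
    (he : e ∈ N) (hw : I.dst e = w) : I.mW N w = some e := by
  have hf : (N.filter fun f => I.dst f = w) = {e} := by
    apply Finset.eq_singleton_iff_unique_mem.mpr
    refine ⟨Finset.mem_filter.mpr ⟨he, hw⟩, ?_⟩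
    intro f hfm
    obtain ⟨hfN, hfw⟩ := Finset.mem_filter.mp hfm
    by_contra hne
    exact (hN f hfN e he hne).2 (hfw.trans hw.symm)
  show (N.filter fun f => I.dst f = w).toList.head? = some e
  rw [hf, Finset.toList_singleton]
  rfl

theorem aux_mU_eq_none {I : PrefInst U W E} {N : Finset E} {u : U}
    (h : ∀ e ∈ N, ¬ I.src e = u) : I.mU N u = none := by
  show (N.filter fun f => I.src f = u).toList.head? = none
  rw [Finset.filter_eq_empty_iff.mpr h, Finset.toList_empty]
  rfl

theorem aux_mW_eq_none {I : PrefInst U W E} {N : Finset E} {w : W}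
    (h : ∀ e ∈ N, ¬ I.dst e = w) : I.mW N w = none := by
  show (N.filter fun f => I.dst f = w).toList.head? = none
  rw [Finset.filter_eq_empty_iff.mpr h, Finset.toList_empty]
  rfl

end Aux

namespace Inst12Facts

open PrefInst

-- preference values
@[simp] lemma pU00 : inst12.pU 0 0 = 1 := rfl
@[simp] lemma pU05 : inst12.pU 0 5 = 2 := rfl
@[simp] lemma pU11 : inst12.pU 1 1 = 1 := rfl
@[simp] lemma pU16 : inst12.pU 1 6 = 2 := rfl
@[simp] lemma pU22 : inst12.pU 2 2 = 1 := rfl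
@[simp] lemma pU27 : inst12.pU 2 7 = 2 := rfl
@[simp] lemma pU33 : inst12.pU 3 3 = 2 := rfl
@[simp] lemma pU38 : inst12.pU 3 8 = 1 := rfl
@[simp] lemma pU44 : inst12.pU 4 4 = 1 := rfl
@[simp] lemma pW00 : inst12.pW 0 0 = 1 := rfl
@[simp] lemma pW11 : inst12.pW 1 1 = 1 := rfl
@[simp] lemma pW15 : inst12.pW 1 5 = 1 := rfl
@[simp] lemma pW22 : inst12.pW 2 2 = 1 := rfl
@[simp] lemma pW26 : inst12.pW 2 6 = 1 := rfl
@[simp] lemma pW33 : inst12.pW 3 3 = 1 := rfl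
@[simp] lemma pW37 : inst12.pW 3 7 = 1 := rfl
@[simp] lemma pW44 : inst12.pW 4 4 = 1 := rfl
@[simp] lemma pW48 : inst12.pW 4 8 = 2 := rfl

lemma hN0 : inst12.IsMatching {0, 1, 2, 3, 4} :=
  show ∀ e ∈ ({0, 1, 2, 3, 4} : Finset (Fin 9)), ∀ f ∈ ({0, 1, 2, 3, 4} : Finset (Fin 9)),
      e ≠ f → inst12.src e ≠ inst12.src f ∧ inst12.dst e ≠ inst12.dst f from by decide
lemma hM0 : inst12.IsMatching {5, 6, 7, 8} :=
  show ∀ e ∈ ({5, 6, 7, 8} : Finset (Fin 9)), ∀ f ∈ ({5, 6, 7, 8} : Finset (Fin 9)),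
      e ≠ f → inst12.src e ≠ inst12.src f ∧ inst12.dst e ≠ inst12.dst f from by decide

-- src/dst fibers
lemma srcfib0 : ∀ e : Fin 9, inst12.src e = 0 → e = 0 ∨ e = 5 := by decide
lemma srcfib1 : ∀ e : Fin 9, inst12.src e = 1 → e = 1 ∨ e = 6 := by decide
lemma srcfib2 : ∀ e : Fin 9, inst12.src e = 2 → e = 2 ∨ e = 7 := by decide
lemma srcfib3 : ∀ e : Fin 9, inst12.src e = 3 → e = 3 ∨ e = 8 := by decide
lemma srcfib4 : ∀ e : Fin 9, inst12.src e = 4 → e = 4 := by decide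
lemma dstfib0 : ∀ e : Fin 9, inst12.dst e = 0 → e = 0 := by decide
lemma dstfib1 : ∀ e : Fin 9, inst12.dst e = 1 → e = 1 ∨ e = 5 := by decide
lemma dstfib2 : ∀ e : Fin 9, inst12.dst e = 2 → e = 2 ∨ e = 6 := by decide
lemma dstfib3 : ∀ e : Fin 9, inst12.dst e = 3 → e = 3 ∨ e = 7 := by decide
lemma dstfib4 : ∀ e : Fin 9, inst12.dst e = 4 → e = 4 ∨ e = 8 := by decide

-- partners under M = {5,6,7,8}
lemma mMu0 : inst12.mU {5, 6, 7, 8} 0 = some 5 := aux_mU_eq_some hM0 (by decide) (by decide)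
lemma mMu1 : inst12.mU {5, 6, 7, 8} 1 = some 6 := aux_mU_eq_some hM0 (by decide) (by decide)
lemma mMu2 : inst12.mU {5, 6, 7, 8} 2 = some 7 := aux_mU_eq_some hM0 (by decide) (by decide)
lemma mMu3 : inst12.mU {5, 6, 7, 8} 3 = some 8 := aux_mU_eq_some hM0 (by decide) (by decide)
lemma mMu4 : inst12.mU {5, 6, 7, 8} 4 = none := aux_mU_eq_none (by decide)
lemma mMw0 : inst12.mW {5, 6, 7, 8} 0 = none := aux_mW_eq_none (by decide)
lemma mMw1 : inst12.mW {5, 6, 7, 8} 1 = some 5 := aux_mW_eq_some hM0 (by decide) (by decide)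
lemma mMw2 : inst12.mW {5, 6, 7, 8} 2 = some 6 := aux_mW_eq_some hM0 (by decide) (by decide)
lemma mMw3 : inst12.mW {5, 6, 7, 8} 3 = some 7 := aux_mW_eq_some hM0 (by decide) (by decide)
lemma mMw4 : inst12.mW {5, 6, 7, 8} 4 = some 8 := aux_mW_eq_some hM0 (by decide) (by decide)

-- partners under N0 = {0,1,2,3,4}
lemma mNu3 : inst12.mU {0, 1, 2, 3, 4} 3 = some 3 := aux_mU_eq_some hN0 (by decide) (by decide)
lemma mNw1 : inst12.mW {0, 1, 2, 3, 4} 1 = some 1 := aux_mW_eq_some hN0 (by decide) (by decide)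
lemma mNw2 : inst12.mW {0, 1, 2, 3, 4} 2 = some 2 := aux_mW_eq_some hN0 (by decide) (by decide)
lemma mNw3 : inst12.mW {0, 1, 2, 3, 4} 3 = some 3 := aux_mW_eq_some hN0 (by decide) (by decide)

variable {N : Finset (Fin 9)}

lemma pair0 (hN : inst12.IsMatching N) :
    0 ≤ inst12.wVoteU {5, 6, 7, 8} N 0 + inst12.wVoteW {5, 6, 7, 8} N 0 := by
  rcases hw : inst12.mW N 0 with _ | e
  · have hwv : inst12.wVoteW {5, 6, 7, 8} N 0 = 0 := by
      rw [wVoteW, hw, mMw0]; simp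
    have huv : 0 ≤ inst12.wVoteU {5, 6, 7, 8} N 0 := by
      rcases hu : inst12.mU N 0 with _ | e
      · rw [wVoteU, hu, mMu0]; simp [valU] <;> norm_num
      · obtain ⟨heN, hes⟩ := aux_mem_of_mU hu
        rcases srcfib0 e hes with rfl | rfl
        · rw [wVoteU, hu, mMu0]; simp [valU] <;> norm_num
        · rw [wVoteU, hu, mMu0]; simp
    omega
  · obtain ⟨heN, hed⟩ := aux_mem_of_mW hw
    have he0 : e = 0 := dstfib0 e hed
    subst he0
    have hu : inst12.mU N 0 = some 0 := aux_mU_eq_some hN heN (by decide)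
    have huv : inst12.wVoteU {5, 6, 7, 8} N 0 = 1 := by
      rw [wVoteU, hu, mMu0]; simp [valU] <;> norm_num
    have hwv : inst12.wVoteW {5, 6, 7, 8} N 0 = -1 := by
      rw [wVoteW, hw, mMw0]; simp [valW] <;> norm_num
    omega

lemma uvote1 (hN : inst12.IsMatching N) : 0 ≤ inst12.wVoteU {5, 6, 7, 8} N 1 := by
  rcases hu : inst12.mU N 1 with _ | e
  · rw [wVoteU, hu, mMu1]; simp [valU] <;> norm_num
  · obtain ⟨heN, hes⟩ := aux_mem_of_mU hu
    rcases srcfib1 e hes with rfl | rfl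
    · rw [wVoteU, hu, mMu1]; simp [valU] <;> norm_num
    · rw [wVoteU, hu, mMu1]; simp

lemma wvote1 (hN : inst12.IsMatching N) : 0 ≤ inst12.wVoteW {5, 6, 7, 8} N 1 := by
  rcases hw : inst12.mW N 1 with _ | e
  · rw [wVoteW, hw, mMw1]; simp [valW] <;> norm_num
  · obtain ⟨heN, hed⟩ := aux_mem_of_mW hw
    rcases dstfib1 e hed with rfl | rfl
    · rw [wVoteW, hw, mMw1]; simp [valW] <;> norm_num
    · rw [wVoteW, hw, mMw1]; simp

lemma uvote2 (hN : inst12.IsMatching N) : 0 ≤ inst12.wVoteU {5, 6, 7, 8} N 2 := by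
  rcases hu : inst12.mU N 2 with _ | e
  · rw [wVoteU, hu, mMu2]; simp [valU] <;> norm_num
  · obtain ⟨heN, hes⟩ := aux_mem_of_mU hu
    rcases srcfib2 e hes with rfl | rfl
    · rw [wVoteU, hu, mMu2]; simp [valU] <;> norm_num
    · rw [wVoteU, hu, mMu2]; simp

lemma wvote2 (hN : inst12.IsMatching N) : 0 ≤ inst12.wVoteW {5, 6, 7, 8} N 2 := by
  rcases hw : inst12.mW N 2 with _ | e
  · rw [wVoteW, hw, mMw2]; simp [valW] <;> norm_num
  · obtain ⟨heN, hed⟩ := aux_mem_of_mW hw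
    rcases dstfib2 e hed with rfl | rfl
    · rw [wVoteW, hw, mMw2]; simp [valW] <;> norm_num
    · rw [wVoteW, hw, mMw2]; simp

lemma wvote3 (hN : inst12.IsMatching N) : 0 ≤ inst12.wVoteW {5, 6, 7, 8} N 3 := by
  rcases hw : inst12.mW N 3 with _ | e
  · rw [wVoteW, hw, mMw3]; simp [valW] <;> norm_num
  · obtain ⟨heN, hed⟩ := aux_mem_of_mW hw
    rcases dstfib3 e hed with rfl | rfl
    · rw [wVoteW, hw, mMw3]; simp [valW] <;> norm_num
    · rw [wVoteW, hw, mMw3]; simp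

lemma pair3 (hN : inst12.IsMatching N) :
    0 ≤ inst12.wVoteU {5, 6, 7, 8} N 3 + inst12.wVoteW {5, 6, 7, 8} N 3 := by
  have hw3 := wvote3 hN
  rcases hu : inst12.mU N 3 with _ | e
  · have : 0 ≤ inst12.wVoteU {5, 6, 7, 8} N 3 := by
      rw [wVoteU, hu, mMu3]; simp [valU] <;> norm_num
    omega
  · obtain ⟨heN, hes⟩ := aux_mem_of_mU hu
    rcases srcfib3 e hes with rfl | rfl
    · have hwN : inst12.mW N 3 = some 3 := aux_mW_eq_some hN heN (by decide)
      have huv : inst12.wVoteU {5, 6, 7, 8} N 3 = -1 := by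
        rw [wVoteU, hu, mMu3]; simp [valU] <;> norm_num
      have hwv : inst12.wVoteW {5, 6, 7, 8} N 3 = 1 := by
        rw [wVoteW, hwN, mMw3]; simp [valW] <;> norm_num
      omega
    · have : 0 ≤ inst12.wVoteU {5, 6, 7, 8} N 3 := by
        rw [wVoteU, hu, mMu3]; simp
      omega

lemma wvote4 (hN : inst12.IsMatching N) : 0 ≤ inst12.wVoteW {5, 6, 7, 8} N 4 := by
  rcases hw : inst12.mW N 4 with _ | e
  · rw [wVoteW, hw, mMw4]; simp [valW] <;> norm_num
  · obtain ⟨heN, hed⟩ := aux_mem_of_mW hw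
    rcases dstfib4 e hed with rfl | rfl
    · rw [wVoteW, hw, mMw4]; simp [valW] <;> norm_num
    · rw [wVoteW, hw, mMw4]; simp

lemma pair4 (hN : inst12.IsMatching N) :
    0 ≤ inst12.wVoteU {5, 6, 7, 8} N 4 + inst12.wVoteW {5, 6, 7, 8} N 4 := by
  have hw4 := wvote4 hN
  rcases hu : inst12.mU N 4 with _ | e
  · have : inst12.wVoteU {5, 6, 7, 8} N 4 = 0 := by
      rw [wVoteU, hu, mMu4]; simp
    omega
  · obtain ⟨heN, hes⟩ := aux_mem_of_mU hu
    have he4 : e = 4 := srcfib4 e hes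
    subst he4
    have hwN : inst12.mW N 4 = some 4 := aux_mW_eq_some hN heN (by decide)
    have huv : inst12.wVoteU {5, 6, 7, 8} N 4 = -1 := by
      rw [wVoteU, hu, mMu4]; simp [valU] <;> norm_num
    have hwv : inst12.wVoteW {5, 6, 7, 8} N 4 = 1 := by
      rw [wVoteW, hwN, mMw4]; simp [valW] <;> norm_num
    omega

end Inst12Facts

open PrefInst in
/-- In the 10-vertex instance, `N = {e_1,…,e_5}` is a weakly stable
matching, `M = {f_1,…,f_4}` is a weakly popular matching, and `|M| = (4/5)|N|`. -/
theorem inst12_properties :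
    inst12.IsMatching {0, 1, 2, 3, 4} ∧ inst12.WeaklyStable {0, 1, 2, 3, 4} ∧
    inst12.IsMatching {5, 6, 7, 8} ∧ inst12.WeaklyPopular {5, 6, 7, 8} ∧
    ((Finset.card ({5, 6, 7, 8} : Finset (Fin 9)) : ℝ) =
      4 / 5 * (Finset.card ({0, 1, 2, 3, 4} : Finset (Fin 9)))) := by
  open Inst12Facts in
  refine ⟨hN0, ?_, hM0, ?_, ?_⟩
  · -- weak stability of N0
    intro e
    rintro ⟨heM, hu, hw⟩
    have h9 : ∀ x : Fin 9, x = 0 ∨ x = 1 ∨ x = 2 ∨ x = 3 ∨ x = 4 ∨ x = 5 ∨ x = 6 ∨ x = 7 ∨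
        x = 8 := by decide
    rcases h9 e with rfl | rfl | rfl | rfl | rfl | rfl | rfl | rfl | rfl
    · exact heM (by decide)
    · exact heM (by decide)
    · exact heM (by decide)
    · exact heM (by decide)
    · exact heM (by decide)
    · rw [show inst12.dst 5 = 1 from rfl, mNw1] at hw
      simp [valW] at hw
    · rw [show inst12.dst 6 = 2 from rfl, mNw2] at hw
      simp [valW] at hw
    · rw [show inst12.dst 7 = 3 from rfl, mNw3] at hw
      simp [valW] at hw
    · rw [show inst12.src 8 = 3 from rfl, mNu3] at hu
      simp [valU] at hu
  · -- weak popularity of M0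
    intro N hN
    rw [Fin.sum_univ_five, Fin.sum_univ_five]
    have h0 := pair0 hN
    have h1u := uvote1 hN
    have h1w := wvote1 hN
    have h2u := uvote2 hN
    have h2w := wvote2 hN
    have h3 := pair3 hN
    have h4 := pair4 hN
    omega
  · rw [show Finset.card ({5, 6, 7, 8} : Finset (Fin 9)) = 4 from by decide,
        show Finset.card ({0, 1, 2, 3, 4} : Finset (Fin 9)) = 5 from by decide]
    norm_num
end
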